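/- Let θ be a steepest-flow trajectory and t0 ≥ 0 with 𝓛(θ(t0)) < 1; assume θ(t) ≠ 0 and ∇𝓛(θ(t)) ≠ 0 for all t ≥ t0, and that s ↦ N(θ(s)) and s ↦ log γ̃(θ(s)) are differentiable on (t0, ∞). Then for all t2 > t1 ≥ t0 with ∫_{t1}^{t2} N(θ'(t))/N(θ(t)) dt > 0, there exists t* ∈ (t1, t2) such that 1/A(t*) − 1 ≤ (1/L) · log(γ̃(θ(t2))/γ̃(θ(t1))) / ∫_{t1}^{t2} N(θ'(t))/N(θ(t)) dt. -/

import Mathlib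

open Filter

noncomputable section

abbrev E (p : ℕ) : Type := EuclideanSpace ℝ (Fin p)

/-- `N` is a norm on `ℝ^p`. -/
def IsNormOn {p : ℕ} (N : E p → ℝ) : Prop :=
  (∀ θ, 0 ≤ N θ) ∧ (∀ θ, N θ = 0 ↔ θ = 0) ∧
    (∀ (c : ℝ) (θ : E p), N (c • θ) = |c| * N θ) ∧
    ∀ θ θ' : E p, N (θ + θ') ≤ N θ + N θ'

/-- The dual norm `N_*(z) = sup {⟨z, v⟩ : N v ≤ 1}`. -/
def DualNorm {p : ℕ} (N : E p → ℝ) (z : E p) : ℝ :=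
  sSup ((fun v => (inner ℝ z v : ℝ)) '' {v | N v ≤ 1})

/-- The exponential loss `𝓛(θ) = Σ_i exp (-(y_i f(θ, x_i)))`. -/
def ExpLoss {p d m : ℕ} (f : E p → E d → ℝ) (x : Fin m → E d) (y : Fin m → ℝ)
    (θ : E p) : ℝ :=
  ∑ i, Real.exp (-(y i * f θ (x i)))

/-- A steepest-flow trajectory for the loss `𝓛` with respect to the norm `N`,
with derivative curve `θ'`. -/
def IsSteepestFlow {p : ℕ} (N : E p → ℝ) (𝓛 : E p → ℝ) (θ θ' : ℝ → E p) : Prop :=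
  ∀ t, (0:ℝ) ≤ t → HasDerivAt θ (θ' t) t ∧
    (inner ℝ (θ' t) (gradient 𝓛 (θ t)) : ℝ) = -(DualNorm N (gradient 𝓛 (θ t))) ^ 2 ∧
    N (θ' t) = DualNorm N (gradient 𝓛 (θ t))

/-- The soft margin `γ̃(θ) = -log 𝓛(θ) / N(θ)^L`. -/
def SoftMargin {p : ℕ} (N : E p → ℝ) (𝓛 : E p → ℝ) (L : ℝ) (θ : E p) : ℝ :=
  -Real.log (𝓛 θ) / N θ ^ L

/-- The hard margin `γ(θ) = (min_i y_i f(θ, x_i)) / N(θ)^L`. -/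
def HardMargin {p d m : ℕ} (N : E p → ℝ) (f : E p → E d → ℝ) (x : Fin m → E d)
    (y : Fin m → ℝ) (L : ℝ) (θ : E p) : ℝ :=
  (⨅ i, y i * f θ (x i)) / N θ ^ L

/-- The alignment `A(t) = ⟨θ(t)/N(θ(t)), -∇𝓛(θ(t))/N_*(∇𝓛(θ(t)))⟩`. -/
def FlowAlignment {p : ℕ} (N : E p → ℝ) (𝓛 : E p → ℝ) (θ : ℝ → E p) (t : ℝ) : ℝ :=
  inner ℝ ((N (θ t))⁻¹ • θ t) (-((DualNorm N (gradient 𝓛 (θ t)))⁻¹ • gradient 𝓛 (θ t)))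

open Topology

/-!
Along the flow, `log γ̃(θ t) = log (-log 𝓛) - L log ρ` with `ρ = N ∘ θ` has derivative
`N_*² / (𝓛 · (-log 𝓛)) - L ρ' / ρ`, and `ρ' ≤ N(θ') = N_*` by the triangle inequality.
Euler's identity for the `L`-homogeneous `f`, together with `-log 𝓛 ≤ y_i f(θ, x_i)`, gives
`⟨θ, -∇𝓛⟩ ≥ L 𝓛 (-log 𝓛)`, so that derivative dominates `(L N_* / ρ) (1 / A - 1)`.
Cauchy's mean value theorem for `log γ̃ ∘ θ` against the primitive of `N(θ') / ρ = N_* / ρ`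
produces the time `t*`.
-/

namespace IsNormOn

variable {p : ℕ} {N : E p → ℝ}

lemma pos (hN : IsNormOn N) {θ : E p} (hθ : θ ≠ 0) : 0 < N θ :=
  (hN.1 θ).lt_of_ne fun h => hθ ((hN.2.1 θ).mp h.symm)

lemma smul_of_nonneg (hN : IsNormOn N) {c : ℝ} (hc : 0 ≤ c) (θ : E p) : N (c • θ) = c * N θ := by
  rw [hN.2.2.1, abs_of_nonneg hc]

lemma sub_le (hN : IsNormOn N) (θ θ' : E p) : N θ - N θ' ≤ N (θ - θ') := by
  linarith [sub_add_cancel θ θ' ▸ hN.2.2.2 (θ - θ') θ']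

lemma convexOn (hN : IsNormOn N) : ConvexOn ℝ Set.univ N := by
  refine ⟨convex_univ, fun θ _ θ' _ a b ha hb _ => ?_⟩
  simpa only [hN.smul_of_nonneg ha, hN.smul_of_nonneg hb, smul_eq_mul] using
    hN.2.2.2 (a • θ) (b • θ')

lemma continuous (hN : IsNormOn N) : Continuous N :=
  continuousOn_univ.mp (hN.convexOn.continuousOn isOpen_univ)

lemma exists_norm_le_mul (hN : IsNormOn N) : ∃ C, 0 ≤ C ∧ ∀ θ : E p, ‖θ‖ ≤ C * N θ := by
  have hinv : ContinuousOn (fun θ => (N θ)⁻¹) (Metric.sphere 0 1) :=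
    hN.continuous.continuousOn.inv₀ fun θ hθ =>
      (hN.pos (ne_zero_of_mem_unit_sphere ⟨θ, hθ⟩)).ne'
  obtain ⟨C, hC⟩ := (isCompact_sphere (0 : E p) 1).exists_bound_of_continuousOn hinv
  refine ⟨max C 0, le_max_right _ _, fun θ => ?_⟩
  rcases eq_or_ne θ 0 with rfl | hθ
  · simpa using mul_nonneg (le_max_right C 0) (hN.1 0)
  have hθn : 0 < ‖θ‖ := norm_pos_iff.mpr hθ
  have hu : ‖θ‖⁻¹ • θ ∈ Metric.sphere (0 : E p) 1 := by
    simp [norm_smul, hθn.ne']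
  have hbound := (le_abs_self _).trans ((Real.norm_eq_abs _ ▸ hC _ hu).trans (le_max_left C 0))
  rw [hN.smul_of_nonneg (inv_nonneg.mpr hθn.le), mul_inv, inv_inv] at hbound
  have hNθ := hN.pos hθ
  rwa [← div_eq_mul_inv, div_le_iff₀ hNθ] at hbound

lemma bddAbove_inner_image (hN : IsNormOn N) (z : E p) :
    BddAbove ((fun v => (inner ℝ z v : ℝ)) '' {v | N v ≤ 1}) := by
  obtain ⟨C, hC0, hC⟩ := hN.exists_norm_le_mul
  refine ⟨‖z‖ * C, ?_⟩
  rintro _ ⟨v, hv, rfl⟩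
  calc (inner ℝ z v : ℝ) ≤ ‖z‖ * ‖v‖ := real_inner_le_norm z v
    _ ≤ ‖z‖ * C := by
      gcongr
      exact (hC v).trans (mul_le_of_le_one_right hC0 hv)

lemma inner_le_dualNorm (hN : IsNormOn N) (z : E p) {v : E p} (hv : N v ≤ 1) :
    (inner ℝ z v : ℝ) ≤ DualNorm N z :=
  le_csSup (hN.bddAbove_inner_image z) ⟨v, hv, rfl⟩

lemma dualNorm_pos (hN : IsNormOn N) {z : E p} (hz : z ≠ 0) : 0 < DualNorm N z := by
  have hNz := hN.pos hz
  have hunit : N ((N z)⁻¹ • z) ≤ 1 := by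
    rw [hN.smul_of_nonneg (inv_nonneg.mpr hNz.le), inv_mul_cancel₀ hNz.ne']
  refine lt_of_lt_of_le ?_ (hN.inner_le_dualNorm z hunit)
  rw [real_inner_smul_right, real_inner_self_eq_norm_sq]
  have := norm_pos_iff.mpr hz
  positivity

lemma dualNorm_convexOn (hN : IsNormOn N) : ConvexOn ℝ Set.univ (DualNorm N) := by
  refine ⟨convex_univ, fun z _ w _ a b ha hb _ => ?_⟩
  refine csSup_le ⟨0, 0, by simp [(hN.2.1 0).mpr rfl], by simp⟩ ?_
  rintro _ ⟨v, hv, rfl⟩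
  simp only [inner_add_left, real_inner_smul_left, smul_eq_mul]
  gcongr
  · exact hN.inner_le_dualNorm z hv
  · exact hN.inner_le_dualNorm w hv

lemma continuous_dualNorm (hN : IsNormOn N) : Continuous (DualNorm N) :=
  continuousOn_univ.mp (hN.dualNorm_convexOn.continuousOn isOpen_univ)

lemma le_of_hasDerivAt_comp (hN : IsNormOn N) {θ : ℝ → E p} {v : E p} {r t : ℝ}
    (hθ : HasDerivAt θ v t) (hr : HasDerivAt (fun s => N (θ s)) r t) : r ≤ N v := by
  have hright : 𝓝[>] t ≤ 𝓝[≠] t := nhdsWithin_mono _ fun s hs => ne_of_gt hs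
  have hslope := (hasDerivAt_iff_tendsto_slope.mp hr).mono_left hright
  have hslopeθ := (hN.continuous.tendsto v).comp
    ((hasDerivAt_iff_tendsto_slope.mp hθ).mono_left hright)
  refine le_of_tendsto_of_tendsto hslope hslopeθ ?_
  filter_upwards [self_mem_nhdsWithin] with s hs
  have hst : 0 ≤ (s - t)⁻¹ := inv_nonneg.mpr (sub_pos.mpr hs).le
  simp only [Function.comp_apply, slope, vsub_eq_sub, smul_eq_mul, hN.smul_of_nonneg hst]
  exact mul_le_mul_of_nonneg_left (hN.sub_le _ _) hst

end IsNormOn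

lemma ContDiff.continuous_gradient {F : Type*} [NormedAddCommGroup F] [InnerProductSpace ℝ F]
    [CompleteSpace F] {g : F → ℝ} (hg : ContDiff ℝ 1 g) : Continuous (gradient g) :=
  (InnerProductSpace.toDual ℝ F).symm.continuous.comp (hg.continuous_fderiv one_ne_zero)

section ExpLoss

variable {p d m : ℕ} {f : E p → E d → ℝ} {x : Fin m → E d} {y : Fin m → ℝ}

lemma contDiff_expLoss (hf : ∀ x' : E d, ContDiff ℝ 1 fun θ => f θ x') :
    ContDiff ℝ 1 (ExpLoss f x y) :=
  ContDiff.sum fun i _ => ((contDiff_const.mul (hf (x i))).neg).exp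

lemma expLoss_pos (hm : 0 < m) (θ : E p) : 0 < ExpLoss f x y θ :=
  Finset.sum_pos (fun _ _ => Real.exp_pos _) ⟨⟨0, hm⟩, Finset.mem_univ _⟩

lemma inner_gradient_expLoss_self (hf : ∀ x' : E d, ContDiff ℝ 1 fun θ => f θ x') {L : ℝ}
    (hhom : ∀ c : ℝ, 0 < c → ∀ (θ : E p) (x' : E d), f (c • θ) x' = c ^ L * f θ x')
    (θ : E p) :
    (inner ℝ (gradient (ExpLoss f x y) θ) θ : ℝ) =
      -L * ∑ i, y i * f θ (x i) * Real.exp (-(y i * f θ (x i))) := by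
  have hchain : HasDerivAt (fun c : ℝ => ExpLoss f x y (c • θ))
      (inner ℝ (gradient (ExpLoss f x y) θ) θ : ℝ) 1 := by
    have hray : HasDerivAt (fun c : ℝ => c • θ) θ 1 := by
      simpa using (hasDerivAt_id (1 : ℝ)).smul_const θ
    have hgrad : HasFDerivAt (ExpLoss f x y)
        (InnerProductSpace.toDual ℝ (E p) (gradient (ExpLoss f x y) θ)) ((1 : ℝ) • θ) := by
      rw [one_smul]
      exact (((contDiff_expLoss hf).differentiable one_ne_zero) θ).hasGradientAt.hasFDerivAt
    exact hgrad.comp_hasDerivAt 1 hray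
  have hhom_loss : (fun c : ℝ => ExpLoss f x y (c • θ)) =ᶠ[𝓝 1]
      fun c => ∑ i, Real.exp (-(y i * (c ^ L * f θ (x i)))) := by
    filter_upwards [Ioi_mem_nhds one_pos] with c hc
    simp only [ExpLoss, hhom c hc]
  have hpow : HasDerivAt (fun c : ℝ => c ^ L) L 1 := by
    simpa using Real.hasDerivAt_rpow_const (x := 1) (p := L) (Or.inl one_ne_zero)
  have hsum : HasDerivAt (fun c : ℝ => ∑ i, Real.exp (-(y i * (c ^ L * f θ (x i)))))
      (∑ i, Real.exp (-(y i * f θ (x i))) * -(y i * (L * f θ (x i)))) 1 := by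
    refine HasDerivAt.fun_sum fun i _ => ?_
    simpa using (((hpow.mul_const (f θ (x i))).const_mul (y i)).neg).exp
  rw [← (hsum.congr_of_eventuallyEq hhom_loss).unique hchain, Finset.mul_sum]
  exact Finset.sum_congr rfl fun i _ => by ring

lemma expLoss_mul_neg_log_le (θ : E p) :
    ExpLoss f x y θ * -Real.log (ExpLoss f x y θ) ≤
      ∑ i, y i * f θ (x i) * Real.exp (-(y i * f θ (x i))) := by
  rw [ExpLoss, Finset.sum_mul]
  refine Finset.sum_le_sum fun i _ => ?_
  rw [mul_comm]
  gcongr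
  have hterm : Real.exp (-(y i * f θ (x i))) ≤ ExpLoss f x y θ :=
    Finset.single_le_sum (f := fun j => Real.exp (-(y j * f θ (x j))))
      (fun j _ => (Real.exp_pos _).le) (Finset.mem_univ i)
  have := Real.log_le_log (Real.exp_pos _) hterm
  rw [Real.log_exp] at this
  unfold ExpLoss at this
  linarith

lemma mul_expLoss_mul_neg_log_le_inner (hf : ∀ x' : E d, ContDiff ℝ 1 fun θ => f θ x')
    {L : ℝ} (hL : 0 ≤ L)
    (hhom : ∀ c : ℝ, 0 < c → ∀ (θ : E p) (x' : E d), f (c • θ) x' = c ^ L * f θ x')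
    (θ : E p) :
    L * (ExpLoss f x y θ * -Real.log (ExpLoss f x y θ)) ≤
      inner ℝ θ (-gradient (ExpLoss f x y) θ) := by
  rw [inner_neg_right, real_inner_comm, inner_gradient_expLoss_self hf hhom, neg_mul, neg_neg]
  exact mul_le_mul_of_nonneg_left (expLoss_mul_neg_log_le θ) hL

end ExpLoss

lemma exists_hasDerivAt_mul_integral_eq {F F' g : ℝ → ℝ} {a b : ℝ} (hab : a < b)
    (hF : ContinuousOn F (Set.Icc a b)) (hF' : ∀ t ∈ Set.Ioo a b, HasDerivAt F (F' t) t)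
    (hg : ContinuousOn g (Set.Icc a b)) :
    ∃ c ∈ Set.Ioo a b, F' c * ∫ t in a..b, g t = (F b - F a) * g c := by
  have hgint : MeasureTheory.IntegrableOn g (Set.uIcc a b) := by
    rw [Set.uIcc_of_le hab.le]
    exact hg.integrableOn_Icc
  have hprim := intervalIntegral.continuousOn_primitive_interval hgint
  rw [Set.uIcc_of_le hab.le] at hprim
  have hg_at : ∀ t ∈ Set.Ioo a b, ContinuousAt g t := fun t ht =>
    hg.continuousAt (Icc_mem_nhds ht.1 ht.2)
  have hprim' : ∀ t ∈ Set.Ioo a b, HasDerivAt (fun u => ∫ s in a..u, g s) (g t) t :=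
    fun t ht => intervalIntegral.integral_hasDerivAt_right
      ((hg.mono (Set.Icc_subset_Icc_right ht.2.le)).intervalIntegrable_of_Icc ht.1.le)
      (ContinuousAt.stronglyMeasurableAtFilter isOpen_Ioo hg_at t ht) (hg_at t ht)
  obtain ⟨c, hc, hcauchy⟩ := exists_ratio_hasDerivAt_eq_ratio_slope F F' hab hF hF' _ g hprim hprim'
  refine ⟨c, hc, ?_⟩
  rwa [intervalIntegral.integral_same, sub_zero, mul_comm] at hcauchy

lemma HasDerivAt.log_div_rpow {ℓ ρ : ℝ → ℝ} {ℓ' ρ' t : ℝ} (L : ℝ) (hℓ : HasDerivAt ℓ ℓ' t)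
    (hρ : HasDerivAt ρ ρ' t) (hℓt : ℓ t ≠ 0) (hρt : 0 < ρ t) :
    HasDerivAt (fun s => Real.log (ℓ s / ρ s ^ L)) (ℓ' / ℓ t - L * (ρ' / ρ t)) t := by
  have hsplit : (fun s => Real.log (ℓ s) - L * Real.log (ρ s)) =ᶠ[𝓝 t]
      fun s => Real.log (ℓ s / ρ s ^ L) := by
    filter_upwards [hℓ.continuousAt.eventually_ne hℓt,
      hρ.continuousAt.eventually (lt_mem_nhds hρt)] with s hℓs hρs
    rw [Real.log_div hℓs (Real.rpow_pos_of_pos hρs L).ne', Real.log_rpow hρs]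
  exact ((hℓ.log hℓt).sub ((hρ.log hρt.ne').const_mul L)).congr_of_eventuallyEq hsplit.symm

lemma softMargin_pos {p : ℕ} {N 𝓛 : E p → ℝ} {θ₀ : E p} (L : ℝ) (h𝓛pos : 0 < 𝓛 θ₀)
    (h𝓛lt : 𝓛 θ₀ < 1) (hNpos : 0 < N θ₀) : 0 < SoftMargin N 𝓛 L θ₀ :=
  div_pos (neg_pos.mpr (Real.log_neg h𝓛pos h𝓛lt)) (Real.rpow_pos_of_pos hNpos L)

lemma continuousAt_log_softMargin {p : ℕ} {N 𝓛 : E p → ℝ} {θ₀ : E p} (L : ℝ)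
    (h𝓛 : ContinuousAt 𝓛 θ₀) (hN : ContinuousAt N θ₀) (h𝓛pos : 0 < 𝓛 θ₀) (h𝓛lt : 𝓛 θ₀ < 1)
    (hNpos : 0 < N θ₀) : ContinuousAt (fun θ => Real.log (SoftMargin N 𝓛 L θ)) θ₀ :=
  ((h𝓛.log h𝓛pos.ne').neg.div (hN.rpow_const (Or.inl hNpos.ne'))
    (Real.rpow_pos_of_pos hNpos L).ne').log (softMargin_pos L h𝓛pos h𝓛lt hNpos).ne'

lemma flowAlignment_eq {p : ℕ} (N 𝓛 : E p → ℝ) (θ : ℝ → E p) (t : ℝ) :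
    FlowAlignment N 𝓛 θ t = inner ℝ (θ t) (-gradient 𝓛 (θ t)) /
      (N (θ t) * DualNorm N (gradient 𝓛 (θ t))) := by
  rw [FlowAlignment, real_inner_smul_left, inner_neg_right, real_inner_smul_right,
    inner_neg_right, div_eq_inv_mul, mul_inv]
  ring

namespace IsSteepestFlow

variable {p : ℕ} {N 𝓛 : E p → ℝ} {θ θ' : ℝ → E p}

lemma hasDerivAt_comp (hflow : IsSteepestFlow N 𝓛 θ θ') (h𝓛 : Differentiable ℝ 𝓛) {t : ℝ}
    (ht : 0 ≤ t) :
    HasDerivAt (fun s => 𝓛 (θ s)) (-DualNorm N (gradient 𝓛 (θ t)) ^ 2) t := by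
  obtain ⟨hθ, hdescent, -⟩ := hflow t ht
  have hchain := (h𝓛 (θ t)).hasGradientAt.hasFDerivAt.comp_hasDerivAt t hθ
  rwa [InnerProductSpace.toDual_apply_apply, real_inner_comm, hdescent] at hchain

lemma antitoneOn_comp (hflow : IsSteepestFlow N 𝓛 θ θ') (h𝓛 : Differentiable ℝ 𝓛) :
    AntitoneOn (fun s => 𝓛 (θ s)) (Set.Ici 0) := by
  refine antitoneOn_of_hasDerivWithinAt_nonpos (convex_Ici 0)
    (fun t ht => (hflow.hasDerivAt_comp h𝓛 ht).continuousAt.continuousWithinAt)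
    (fun t ht => (hflow.hasDerivAt_comp h𝓛 (interior_subset ht)).hasDerivWithinAt)
    fun t _ => neg_nonpos.mpr (sq_nonneg _)

lemma hasDerivAt_log_softMargin (hflow : IsSteepestFlow N 𝓛 θ θ') (h𝓛 : Differentiable ℝ 𝓛)
    (L : ℝ) {t ρ' : ℝ} (ht : 0 ≤ t) (h𝓛pos : 0 < 𝓛 (θ t)) (h𝓛lt : 𝓛 (θ t) < 1)
    (hρ : HasDerivAt (fun s => N (θ s)) ρ' t) (hρpos : 0 < N (θ t)) :
    HasDerivAt (fun s => Real.log (SoftMargin N 𝓛 L (θ s)))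
      (DualNorm N (gradient 𝓛 (θ t)) ^ 2 / 𝓛 (θ t) / -Real.log (𝓛 (θ t)) -
        L * (ρ' / N (θ t))) t := by
  have hℓ := ((hflow.hasDerivAt_comp h𝓛 ht).log h𝓛pos.ne').neg
  rw [neg_div, neg_neg] at hℓ
  exact hℓ.log_div_rpow L hρ (neg_pos.mpr (Real.log_neg h𝓛pos h𝓛lt)).ne' hρpos

lemma lt_one_of_le (hflow : IsSteepestFlow N 𝓛 θ θ') (h𝓛 : Differentiable ℝ 𝓛) {t0 t : ℝ}
    (ht0 : 0 ≤ t0) (hsep : 𝓛 (θ t0) < 1) (ht : t0 ≤ t) : 𝓛 (θ t) < 1 :=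
  (hflow.antitoneOn_comp h𝓛 ht0 (ht0.trans ht) ht).trans_lt hsep

lemma exists_deriv_log_softMargin_mul_integral_eq (hflow : IsSteepestFlow N 𝓛 θ θ')
    (hN : IsNormOn N) (h𝓛 : ContDiff ℝ 1 𝓛) (L : ℝ) {t1 t2 : ℝ} (ht1 : 0 ≤ t1) (ht12 : t1 < t2)
    (h𝓛pos : ∀ t ∈ Set.Icc t1 t2, 0 < 𝓛 (θ t)) (h𝓛lt : ∀ t ∈ Set.Icc t1 t2, 𝓛 (θ t) < 1)
    (hθ : ∀ t ∈ Set.Icc t1 t2, θ t ≠ 0)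
    (hNdiff : ∀ t ∈ Set.Ioo t1 t2, DifferentiableAt ℝ (fun s => N (θ s)) t) :
    ∃ c ∈ Set.Ioo t1 t2,
      (DualNorm N (gradient 𝓛 (θ c)) ^ 2 / 𝓛 (θ c) / -Real.log (𝓛 (θ c)) -
          L * (deriv (fun s => N (θ s)) c / N (θ c))) * ∫ t in t1..t2, N (θ' t) / N (θ t) =
        (Real.log (SoftMargin N 𝓛 L (θ t2)) - Real.log (SoftMargin N 𝓛 L (θ t1))) *
          (DualNorm N (gradient 𝓛 (θ c)) / N (θ c)) := by
  have hθcont (t : ℝ) (ht : t ∈ Set.Icc t1 t2) : ContinuousAt θ t :=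
    (hflow t (ht1.trans ht.1)).1.continuousAt
  have hF : ContinuousOn (fun s => Real.log (SoftMargin N 𝓛 L (θ s))) (Set.Icc t1 t2) :=
    fun t ht => ((continuousAt_log_softMargin L h𝓛.continuous.continuousAt
      hN.continuous.continuousAt (h𝓛pos t ht) (h𝓛lt t ht) (hN.pos (hθ t ht))).comp
        (hθcont t ht)).continuousWithinAt
  have hF' (t : ℝ) (ht : t ∈ Set.Ioo t1 t2) :=
    hflow.hasDerivAt_log_softMargin (h𝓛.differentiable one_ne_zero) L (ht1.trans ht.1.le)
      (h𝓛pos t (Set.Ioo_subset_Icc_self ht)) (h𝓛lt t (Set.Ioo_subset_Icc_self ht))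
      (hNdiff t ht).hasDerivAt (hN.pos (hθ t (Set.Ioo_subset_Icc_self ht)))
  have hg : ContinuousOn (fun s => DualNorm N (gradient 𝓛 (θ s)) / N (θ s)) (Set.Icc t1 t2) :=
    fun t ht => (((hN.continuous_dualNorm.comp h𝓛.continuous_gradient).continuousAt.comp
      (hθcont t ht)).div (hN.continuous.continuousAt.comp (hθcont t ht))
        (hN.pos (hθ t ht)).ne').continuousWithinAt
  have hspeed : Set.EqOn (fun s => N (θ' s) / N (θ s))
      (fun s => DualNorm N (gradient 𝓛 (θ s)) / N (θ s)) (Set.Icc t1 t2) := fun t ht => by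
    simp only [(hflow t (ht1.trans ht.1)).2.2]
  obtain ⟨c, hc, hmvt⟩ := exists_hasDerivAt_mul_integral_eq ht12 hF hF' (hg.congr hspeed)
  refine ⟨c, hc, ?_⟩
  rwa [(hflow c (ht1.trans hc.1.le)).2.2] at hmvt

end IsSteepestFlow

lemma one_div_flowAlignment_sub_one_le {p d m : ℕ} {f : E p → E d → ℝ} {x : Fin m → E d}
    {y : Fin m → ℝ} (hf : ∀ x' : E d, ContDiff ℝ 1 fun θ => f θ x') {L : ℝ} (hL : 0 < L)
    (hhom : ∀ c : ℝ, 0 < c → ∀ (θ : E p) (x' : E d), f (c • θ) x' = c ^ L * f θ x')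
    {N : E p → ℝ} (θ : ℝ → E p) {t ρ' : ℝ} (hρpos : 0 < N (θ t))
    (hDpos : 0 < DualNorm N (gradient (ExpLoss f x y) (θ t)))
    (h𝓛pos : 0 < ExpLoss f x y (θ t)) (h𝓛lt : ExpLoss f x y (θ t) < 1)
    (hρ' : ρ' ≤ DualNorm N (gradient (ExpLoss f x y) (θ t))) :
    1 / FlowAlignment N (ExpLoss f x y) θ t - 1 ≤
      N (θ t) / (L * DualNorm N (gradient (ExpLoss f x y) (θ t))) *
        (DualNorm N (gradient (ExpLoss f x y) (θ t)) ^ 2 / ExpLoss f x y (θ t) /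
          -Real.log (ExpLoss f x y (θ t)) - L * (ρ' / N (θ t))) := by
  set D := DualNorm N (gradient (ExpLoss f x y) (θ t))
  set ℓ := -Real.log (ExpLoss f x y (θ t))
  have hℓ : 0 < ℓ := neg_pos.mpr (Real.log_neg h𝓛pos h𝓛lt)
  have hQ : 0 < L * (ExpLoss f x y (θ t) * ℓ) := by positivity
  have hinner := mul_expLoss_mul_neg_log_le_inner hf hL.le hhom (θ t) (x := x) (y := y)
  have hexpand : N (θ t) / (L * D) * (D ^ 2 / ExpLoss f x y (θ t) / ℓ - L * (ρ' / N (θ t))) =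
      N (θ t) * D / (L * (ExpLoss f x y (θ t) * ℓ)) - ρ' / D := by
    field_simp
  rw [flowAlignment_eq, one_div_div, hexpand]
  gcongr ?_ - ?_
  · exact div_le_div_of_nonneg_left (by positivity) hQ hinner
  · rwa [div_le_one hDpos]

theorem stmt_9_general {p d m : ℕ} (hm : 0 < m)
    (x : Fin m → E d) (y : Fin m → ℝ)
    (L : ℝ) (hL : 0 < L) (f : E p → E d → ℝ)
    (hf : ∀ x' : E d, ContDiff ℝ 1 fun θ => f θ x')
    (hhom : ∀ c : ℝ, 0 < c → ∀ (θ : E p) (x' : E d), f (c • θ) x' = c ^ L * f θ x')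
    (N : E p → ℝ) (hN : IsNormOn N)
    (θ θ' : ℝ → E p) (hflow : IsSteepestFlow N (ExpLoss f x y) θ θ')
    (t0 : ℝ) (ht0 : 0 ≤ t0) (hsep : ExpLoss f x y (θ t0) < 1)
    (hθ0 : ∀ t, t0 ≤ t → θ t ≠ 0)
    (hg0 : ∀ t, t0 ≤ t → gradient (ExpLoss f x y) (θ t) ≠ 0)
    (hNdiff : ∀ t ∈ Set.Ioi t0, DifferentiableAt ℝ (fun s => N (θ s)) t)
    (t1 t2 : ℝ) (ht1 : t0 ≤ t1) (ht12 : t1 < t2)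
    (hint : 0 < ∫ t in t1..t2, N (θ' t) / N (θ t)) :
    ∃ tstar ∈ Set.Ioo t1 t2,
      1 / FlowAlignment N (ExpLoss f x y) θ tstar - 1 ≤
        (1 / L) * Real.log (SoftMargin N (ExpLoss f x y) L (θ t2) /
            SoftMargin N (ExpLoss f x y) L (θ t1)) /
          (∫ t in t1..t2, N (θ' t) / N (θ t)) := by
  have h𝓛 : ContDiff ℝ 1 (ExpLoss f x y) := contDiff_expLoss hf
  have h𝓛pos (t : ℝ) : 0 < ExpLoss f x y (θ t) := expLoss_pos hm (θ t)
  have h𝓛lt (t : ℝ) (ht : t0 ≤ t) : ExpLoss f x y (θ t) < 1 :=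
    hflow.lt_one_of_le (h𝓛.differentiable one_ne_zero) ht0 hsep ht
  obtain ⟨c, hc, hmvt⟩ := hflow.exists_deriv_log_softMargin_mul_integral_eq hN h𝓛 L
    (ht0.trans ht1) ht12 (fun t _ => h𝓛pos t) (fun t ht => h𝓛lt t (ht1.trans ht.1))
    (fun t ht => hθ0 t (ht1.trans ht.1)) (fun t ht => hNdiff t (ht1.trans_lt ht.1))
  have hc0 : t0 ≤ c := ht1.trans hc.1.le
  obtain ⟨hθc, -, hspeed⟩ := hflow c (ht0.trans hc0)
  have hρ' := hN.le_of_hasDerivAt_comp hθc (hNdiff c (ht1.trans_lt hc.1)).hasDerivAt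
  rw [hspeed] at hρ'
  have hρc := hN.pos (hθ0 c hc0)
  have hDc := hN.dualNorm_pos (hg0 c hc0)
  have hγ (t : ℝ) (ht : t0 ≤ t) : SoftMargin N (ExpLoss f x y) L (θ t) ≠ 0 :=
    (softMargin_pos L (h𝓛pos t) (h𝓛lt t ht) (hN.pos (hθ0 t ht))).ne'
  refine ⟨c, hc, ?_⟩
  rw [Real.log_div (hγ t2 (ht1.trans ht12.le)) (hγ t1 ht1)]
  calc _ ≤ _ := one_div_flowAlignment_sub_one_le hf hL hhom θ hρc hDc (h𝓛pos c) (h𝓛lt c hc0) hρ'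
    _ = _ := by
      rw [eq_div_of_mul_eq hint.ne' hmvt]
      field_simp

theorem stmt_9 {p d m : ℕ} (hp : 0 < p) (hd : 0 < d) (hm : 0 < m)
    (x : Fin m → E d) (y : Fin m → ℝ) (hy : ∀ i, y i = 1 ∨ y i = -1)
    (L : ℝ) (hL : 0 < L) (f : E p → E d → ℝ)
    (hf : ∀ x' : E d, ContDiff ℝ 1 fun θ => f θ x')
    (hhom : ∀ c : ℝ, 0 < c → ∀ (θ : E p) (x' : E d), f (c • θ) x' = c ^ L * f θ x')
    (N : E p → ℝ) (hN : IsNormOn N)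
    (θ θ' : ℝ → E p) (hflow : IsSteepestFlow N (ExpLoss f x y) θ θ')
    (t0 : ℝ) (ht0 : 0 ≤ t0) (hsep : ExpLoss f x y (θ t0) < 1)
    (hθ0 : ∀ t, t0 ≤ t → θ t ≠ 0)
    (hg0 : ∀ t, t0 ≤ t → gradient (ExpLoss f x y) (θ t) ≠ 0)
    (hNdiff : ∀ t ∈ Set.Ioi t0, DifferentiableAt ℝ (fun s => N (θ s)) t)
    (hγdiff : ∀ t ∈ Set.Ioi t0, DifferentiableAt ℝ
      (fun s => Real.log (SoftMargin N (ExpLoss f x y) L (θ s))) t)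
    (t1 t2 : ℝ) (ht1 : t0 ≤ t1) (ht12 : t1 < t2)
    (hint : 0 < ∫ t in t1..t2, N (θ' t) / N (θ t)) :
    ∃ tstar ∈ Set.Ioo t1 t2,
      1 / FlowAlignment N (ExpLoss f x y) θ tstar - 1 ≤
        (1 / L) * Real.log (SoftMargin N (ExpLoss f x y) L (θ t2) /
            SoftMargin N (ExpLoss f x y) L (θ t1)) /
          (∫ t in t1..t2, N (θ' t) / N (θ t)) :=
  stmt_9_general hm x y L hL f hf hhom N hN θ θ' hflow t0 ht0 hsep hθ0 hg0 hNdiff t1 t2 ht1 ht12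
    hint
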